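/- arXiv:1505.06038 — 6 statements merged into one kernel-verified Lean document; each statement's English description precedes it below -/
import Mathlib

section
/- Let p be an odd prime, T ≤ GL_2(F_p) the diagonal torus, and w = [[0,1],[1,0]]. With the action of GL_2(F_p) on S^l v^k as above, for 1 ≤ l ≤ p-1 and 0 ≤ k ≤ p-2 the invariants (S^l v^k)^{T⟨w⟩} equal: the span of y_1^{2j} y_2^{2j} v^{p-1-2j} if l = 4j and k = p-1-2j with 1 ≤ j ≤ (p-1)/4; the span of y_1^{p-1} + y_2^{p-1} if l = p-1 and k = 0; and 0 otherwise. -/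
private lemma dvd_of_forall_units_pow_eq_one (p n : ℕ) [Fact p.Prime]
    (h : ∀ α : (ZMod p)ˣ, (α : ZMod p) ^ n = 1) : (p - 1) ∣ n := by
  obtain ⟨g, hg⟩ := IsCyclic.exists_generator (α := (ZMod p)ˣ)
  have hcard : orderOf g = p - 1 := by
    rw [orderOf_eq_card_of_forall_mem_zpowers hg, Nat.card_eq_fintype_card,
      ZMod.card_units_eq_totient, Nat.totient_prime Fact.out]
  rw [← hcard, orderOf_dvd_iff_pow_eq_one]
  exact Units.ext (by rw [Units.val_pow_eq_pow_val, Units.val_one]; exact h g)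

/-- Lemma 4.8 of the paper: `T⟨w⟩`-invariants of `S^l v^k`.  An element of
`S^l v^k` is encoded by its coefficient function `f : ℕ → ZMod p`, where `f j`
is the coefficient of the monomial `y₁^j y₂^(l-j) v^k`; a diagonal matrix
`diag(α, β)` acts on this monomial by the scalar `α^(j+k) β^(l-j+k)`, and the
permutation matrix `w` sends it to `(-1)^k y₁^(l-j) y₂^j v^k`. -/
theorem stmt3 (p l k : ℕ) (hp : p.Prime) (hodd : Odd p)
    (hl1 : 1 ≤ l) (hl2 : l ≤ p - 1) (hk : k ≤ p - 2)
    (f : ℕ → ZMod p) (hf : ∀ j, l < j → f j = 0) :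
    ((∀ α β : (ZMod p)ˣ, ∀ j ≤ l,
        (α : ZMod p) ^ (j + k) * (β : ZMod p) ^ (l - j + k) * f j = f j) ∧
      (∀ j ≤ l, f (l - j) = (-1 : ZMod p) ^ k * f j)) ↔
      ((∃ i, 1 ≤ i ∧ 4 * i ≤ p - 1 ∧ l = 4 * i ∧ k = p - 1 - 2 * i ∧
          ∀ j ≤ l, j ≠ 2 * i → f j = 0) ∨
        (l = p - 1 ∧ k = 0 ∧ f 0 = f (p - 1) ∧
          ∀ j ≤ l, j ≠ 0 → j ≠ p - 1 → f j = 0) ∨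
        (∀ j ≤ l, f j = 0)) := by
  haveI : Fact p.Prime := ⟨hp⟩
  have hp3 : 3 ≤ p := by
    rcases hodd with ⟨m, hm⟩
    have := hp.two_le
    omega
  haveI : Fact (2 < p) := ⟨by omega⟩
  have hne : (-1 : ZMod p) ≠ 1 := CharP.neg_one_ne_one (ZMod p) p
  constructor
  · rintro ⟨hA, hB⟩
    by_cases hz : ∀ j ≤ l, f j = 0
    · exact Or.inr (Or.inr hz)
    push_neg at hz
    obtain ⟨j₀, hj₀l, hj₀⟩ := hz
    -- for nonzero coefficients, strong constraints hold
    have hcase : ∀ j ≤ l, f j ≠ 0 →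
        (j = 0 ∧ k = 0 ∧ l = p - 1) ∨ (j = p - 1 ∧ k = 0 ∧ l = p - 1) ∨
        (l = 2 * j ∧ j + k = p - 1) := by
      intro j hj hfj
      have hd1 : (p - 1) ∣ (j + k) := by
        apply dvd_of_forall_units_pow_eq_one
        intro α
        have h1 := hA α 1 j hj
        simp only [Units.val_one, one_pow, mul_one] at h1
        have h2 : (α : ZMod p) ^ (j + k) * f j = 1 * f j := by rw [one_mul]; exact h1
        exact mul_right_cancel₀ hfj h2
      have hd2 : (p - 1) ∣ (l - j + k) := by
        apply dvd_of_forall_units_pow_eq_one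
        intro β
        have h1 := hA 1 β j hj
        simp only [Units.val_one, one_pow, one_mul] at h1
        have h2 : (β : ZMod p) ^ (l - j + k) * f j = 1 * f j := by rw [one_mul]; exact h1
        exact mul_right_cancel₀ hfj h2
      have key : ∀ n, (p - 1) ∣ n → n < 2 * (p - 1) → n = 0 ∨ n = p - 1 := by
        rintro n ⟨c, rfl⟩ hlt
        match c with
        | 0 => left; rfl
        | 1 => right; exact (mul_one _)
        | (c + 2) =>
          exfalso
          have h2 : (p - 1) * 2 ≤ (p - 1) * (c + 2) := Nat.mul_le_mul_left _ (by omega)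
          omega
      have e1 := key (j + k) hd1 (by omega)
      have e2 := key (l - j + k) hd2 (by omega)
      omega
    have hC2 : k = 0 → l = p - 1 →
        ((∃ i, 1 ≤ i ∧ 4 * i ≤ p - 1 ∧ l = 4 * i ∧ k = p - 1 - 2 * i ∧
            ∀ j ≤ l, j ≠ 2 * i → f j = 0) ∨
          (l = p - 1 ∧ k = 0 ∧ f 0 = f (p - 1) ∧
            ∀ j ≤ l, j ≠ 0 → j ≠ p - 1 → f j = 0) ∨
          (∀ j ≤ l, f j = 0)) := by
      intro h2 h3
      refine Or.inr (Or.inl ⟨h3, h2, ?_, ?_⟩)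
      · have hb := hB 0 (by omega)
        rw [h2, h3] at hb
        simpa using hb.symm
      · intro j hj hj0 hjp
        by_contra hfj
        rcases hcase j hj hfj with ⟨a1, a2, a3⟩ | ⟨a1, a2, a3⟩ | ⟨a1, a2⟩ <;> omega
    rcases hcase j₀ hj₀l hj₀ with ⟨h1, h2, h3⟩ | ⟨h1, h2, h3⟩ | ⟨h1, h2⟩
    · exact hC2 h2 h3
    · exact hC2 h2 h3
    -- l = 2 j₀, j₀ + k = p - 1
    · clear hC2
      have hb := hB j₀ hj₀l
      have hlj : l - j₀ = j₀ := by omega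
      rw [hlj] at hb
      have hpow : (-1 : ZMod p) ^ k = 1 := by
        have h2' : (-1 : ZMod p) ^ k * f j₀ = 1 * f j₀ := by rw [one_mul]; exact hb.symm
        exact mul_right_cancel₀ hj₀ h2'
      have hkeven : Even k := by
        rcases Nat.even_or_odd k with he | ho
        · exact he
        · exact absurd (by rw [ho.neg_one_pow] at hpow; exact hpow) hne
      have hj0even : Even j₀ := by
        rcases hodd with ⟨m, hm⟩
        rcases hkeven with ⟨t, ht⟩
        refine ⟨m - t, ?_⟩
        omega
      obtain ⟨i, hi⟩ := hj0even
      refine Or.inl ⟨i, ?_, ?_, ?_, ?_, ?_⟩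
      · omega
      · omega
      · omega
      · omega
      intro j hj hji
      by_contra hfj
      rcases hcase j hj hfj with ⟨a1, a2, a3⟩ | ⟨a1, a2, a3⟩ | ⟨a1, a2⟩ <;> omega
  · rintro (⟨i, hi1, hi2, hli, hki, hsupp⟩ | ⟨hlp, hk0, hfe, hsupp⟩ | hz)
    -- case l = 4i, k = p-1-2i
    · have hall : ∀ j, j ≠ 2 * i → f j = 0 := by
        intro j hj
        by_cases h : j ≤ l
        · exact hsupp j h hj
        · exact hf j (by omega)
      constructor
      · intro α β j hj
        by_cases hji : j = 2 * i
        · have e1 : j + k = p - 1 := by omega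
          have e2 : l - j + k = p - 1 := by omega
          rw [e1, e2, ZMod.pow_card_sub_one_eq_one α.ne_zero,
            ZMod.pow_card_sub_one_eq_one β.ne_zero]
          ring
        · rw [hall j hji]; ring
      · intro j hj
        by_cases hji : j = 2 * i
        · have hlj : l - j = j := by omega
          have hkeven : Even k := by
            rcases hodd with ⟨m, hm⟩
            refine ⟨m - i, ?_⟩
            omega
          rw [hlj, hkeven.neg_one_pow, one_mul]
        · rw [hall j hji, hall (l - j) (by omega)]
          ring
    -- case l = p-1, k = 0
    · have hall : ∀ j, j ≠ 0 → j ≠ p - 1 → f j = 0 := by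
        intro j h0 h1
        by_cases h : j ≤ l
        · exact hsupp j h h0 h1
        · exact hf j (by omega)
      constructor
      · intro α β j hj
        by_cases h0 : j = 0
        · have e1 : j + k = 0 := by omega
          have e2 : l - j + k = p - 1 := by omega
          rw [e1, e2, pow_zero, ZMod.pow_card_sub_one_eq_one β.ne_zero]
          ring
        by_cases h1 : j = p - 1
        · have e1 : j + k = p - 1 := by omega
          have e2 : l - j + k = 0 := by omega
          rw [e1, e2, pow_zero, ZMod.pow_card_sub_one_eq_one α.ne_zero]
          ring
        · rw [hall j h0 h1]; ring
      · intro j hj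
        rw [hk0, pow_zero, one_mul]
        by_cases h0 : j = 0
        · rw [h0, Nat.sub_zero, hlp]; exact hfe.symm
        by_cases h1 : j = p - 1
        · rw [h1, show l - (p - 1) = 0 from by omega]; exact hfe
        · rw [hall j h0 h1, hall (l - j) (by omega) (by omega)]
    -- case f = 0
    · have hall : ∀ j, f j = 0 := by
        intro j
        by_cases h : j ≤ l
        · exact hz j h
        · exact hf j (by omega)
      exact ⟨fun α β j _ => by rw [hall j]; ring,
        fun j _ => by rw [hall j, hall (l - j)]; ring⟩
end

section
/- Let p be a prime with p-1 = 3m and m = 2n, and w = [[0,1],[1,0]]. With H⟨w⟩ = ⟨diag(ξ,ξ), diag(ξ^3,1), w⟩ acting on S^{p-1} by linear substitution (w swaps y_1 and y_2), the invariants (S^{p-1})^{H⟨w⟩} form a 2-dimensional space with basis y_1^{p-1} + y_2^{p-1} and y_1^{2m} y_2^m + y_1^m y_2^{2m}. -/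
/-- Invariants of `H⟨w⟩` on `S^(p-1)`.  An element of `S^(p-1)` is encoded by
its coefficient function `f`, where `f j` is the coefficient of
`y₁^j y₂^(p-1-j)`; the element `diag(ξ,ξ)^s ⬝ diag(ξ³,1)^t` multiplies this
monomial by `ξ^(s(p-1) + 3tj)`, and `w` swaps `y₁` and `y₂`, i.e. sends the
coefficient at `j` to the coefficient at `p-1-j`.  The invariants form the
2-dimensional span of `y₁^(p-1) + y₂^(p-1)` and `y₁^(2m) y₂^m + y₁^m y₂^(2m)`. -/
theorem stmt6 (p m n : ℕ) (hp : p.Prime)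
    (hm : p - 1 = 3 * m) (hn : m = 2 * n)
    (ξ : (ZMod p)ˣ) (hξ : orderOf ξ = p - 1)
    (f : ℕ → ZMod p) (hf : ∀ j, p - 1 < j → f j = 0) :
    ((∀ s t : ℤ, ∀ j ≤ p - 1,
        ((ξ ^ (s * ((p : ℤ) - 1) + t * (3 * (j : ℤ))) : (ZMod p)ˣ) : ZMod p) * f j
          = f j) ∧
      (∀ j ≤ p - 1, f (p - 1 - j) = f j)) ↔
      (f 0 = f (3 * m) ∧ f m = f (2 * m) ∧
        ∀ j ≤ p - 1, f j ≠ 0 → j = 0 ∨ j = m ∨ j = 2 * m ∨ j = 3 * m) := by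
  haveI := Fact.mk hp
  have hp2 := hp.two_le
  have hm1 : 1 ≤ m := by omega
  have hpcast : ((p : ℤ) - 1) = ((3 * m : ℕ) : ℤ) := by
    rw [← hm]; push_cast; omega
  constructor
  · rintro ⟨h1, h2⟩
    have key : ∀ j ≤ p - 1, f j ≠ 0 → j = 0 ∨ j = m ∨ j = 2 * m ∨ j = 3 * m := by
      intro j hj hfj
      have h := h1 0 1 j hj
      have hu : ((ξ ^ ((0:ℤ) * ((p : ℤ) - 1) + 1 * (3 * (j : ℤ))) : (ZMod p)ˣ) : ZMod p)
          = 1 := by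
        have := mul_right_cancel₀ hfj (h.trans (one_mul (f j)).symm)
        exact this
      have hu1 : ξ ^ ((0:ℤ) * ((p : ℤ) - 1) + 1 * (3 * (j : ℤ))) = 1 := Units.ext hu
      have hdvd : ((orderOf ξ : ℤ)) ∣ (0:ℤ) * ((p : ℤ) - 1) + 1 * (3 * (j : ℤ)) :=
        orderOf_dvd_iff_zpow_eq_one.mpr hu1
      rw [hξ, hm] at hdvd
      have hdvd2 : ((3 * m : ℕ) : ℤ) ∣ ((3 * j : ℕ) : ℤ) := by
        convert hdvd using 1; push_cast; ring
      have hdvd3 : 3 * m ∣ 3 * j := Int.natCast_dvd_natCast.mp hdvd2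
      have hmj : m ∣ j := (mul_dvd_mul_iff_left (by norm_num : (3:ℕ) ≠ 0)).mp hdvd3
      obtain ⟨k, rfl⟩ := hmj
      have hk : k ≤ 3 := by
        by_contra hk
        push_neg at hk
        have : m * 4 ≤ m * k := Nat.mul_le_mul_left m hk
        omega
      interval_cases k <;> omega
    refine ⟨?_, ?_, key⟩
    · have h := h2 0 (by omega)
      rw [Nat.sub_zero, hm] at h
      exact h.symm
    · have h := h2 m (by omega)
      have e : p - 1 - m = 2 * m := by omega
      rw [e] at h
      exact h.symm
  · rintro ⟨e0, e1, hsupp⟩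
    constructor
    · intro s t j hj
      by_cases hfj : f j = 0
      · rw [hfj, mul_zero]
      · have hdvd : ((orderOf ξ : ℤ)) ∣ s * ((p : ℤ) - 1) + t * (3 * (j : ℤ)) := by
          rw [hξ]
          have hj4 := hsupp j hj hfj
          have hd : ((p:ℤ) - 1) ∣ (3 * (j : ℤ)) := by
            rw [hpcast]
            rcases hj4 with rfl | rfl | rfl | rfl
            · exact ⟨0, by push_cast; ring⟩
            · exact ⟨1, by push_cast; ring⟩
            · exact ⟨2, by push_cast; ring⟩
            · exact ⟨3, by push_cast; ring⟩
          have hd2 : (((p - 1 : ℕ)) : ℤ) ∣ s * ((p : ℤ) - 1) + t * (3 * (j : ℤ)) := by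
            have : (((p - 1 : ℕ)) : ℤ) = (p : ℤ) - 1 := by push_cast; omega
            rw [this]
            exact dvd_add (Dvd.intro_left s rfl) (Dvd.dvd.mul_left hd t)
          exact hd2
        have : ξ ^ (s * ((p : ℤ) - 1) + t * (3 * (j : ℤ))) = 1 :=
          orderOf_dvd_iff_zpow_eq_one.mp hdvd
        rw [this, Units.val_one, one_mul]
    · intro j hj
      rw [hm] at hj ⊢
      by_cases hfj : f j = 0
      · by_cases hfk : f (3 * m - j) = 0
        · rw [hfj, hfk]
        · rcases hsupp (3 * m - j) (by omega) hfk with h | h | h | h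
          · have : j = 3 * m := by omega
            rw [this]
            simpa using e0
          · have : j = 2 * m := by omega
            rw [this]
            have e : 3 * m - 2 * m = m := by omega
            rw [e]; exact e1
          · have : j = m := by omega
            rw [this]
            have e : 3 * m - m = 2 * m := by omega
            rw [e]; exact e1.symm
          · have : j = 0 := by omega
            rw [this]
            simpa using e0.symm
      · rcases hsupp j (by omega) hfj with h | h | h | h <;> rw [h]
        · simpa using e0.symm
        · have e : 3 * m - m = 2 * m := by omega
          rw [e]; exact e1.symm
        · have e : 3 * m - 2 * m = m := by omega
          rw [e]; exact e1
        · simpa using e0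
end

section
/- Let p be an odd prime and A = F_p[C, V] a polynomial ring in two variables. Set D_1 = C^p + V and D_2 = C V, and let D = F_p[D_1, D_2] ⊆ A. Then A is a free D-module with basis 1, C, C^2, …, C^{p-1}, V; that is, A = D{1, C, …, C^{p-1}, V}. -/
/-!
The substitution `φ : C ↦ C^p + V, V ↦ CV` of `A = K[C,V]` has image `D`, and `C` is a root of
`T^(p+1) - φ(C) T + φ(V)`, since `C^(p+1) - (C^p + V) C + CV = 0`. The induced map
`A[T]/(T^(p+1) - C T + V) → A` (coefficients via `φ`, `T ↦ C`) is an isomorphism: its inverse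
sends `C ↦ T` and `V ↦ C - T^p`. The power basis of the quotient therefore makes `A` free over
`φ(A) = D` on `1, C, …, C^p`, and `C^p = D₁ - V` turns this into the basis `1, C, …, C^(p-1), V`.
-/

open MvPolynomial Function
open scoped Polynomial

theorem AdjoinRoot.bijective_sum_mul_pow {R S : Type*} [CommRing R] [CommRing S] {g : R[X]}
    (hg : g.Monic) {n : ℕ} (hn : g.natDegree = n) {φ : R →+* S} {x : S} (hx : g.eval₂ φ x = 0)
    (hlift : Bijective (lift φ x hx)) :
    Bijective fun r : Fin n → R => ∑ i, φ (r i) * x ^ (i : ℕ) := by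
  let b := (powerBasis' hg).basis.reindex (finCongr ((powerBasis'_dim hg).trans hn))
  have h : (fun r : Fin n → R => ∑ i, φ (r i) * x ^ (i : ℕ)) = lift φ x hx ∘ b.equivFun.symm := by
    funext r
    simp [b, Module.Basis.equivFun_symm_apply, Algebra.smul_def]
  exact h ▸ hlift.comp b.equivFun.symm.bijective

theorem bijective_sum_mul_pow_replace_last {R S : Type*} [CommRing R] [CommRing S] (φ : R →+* S)
    {n : ℕ} [NeZero n] {x y : S} (c : R) (hy : y = φ c - x ^ n)
    (hE : Bijective fun r : Fin (n + 1) → R => ∑ i, φ (r i) * x ^ (i : ℕ)) :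
    Bijective fun r : Fin (n + 1) → R =>
      ∑ i, φ (r i) * if (i : ℕ) = n then y else x ^ (i : ℕ) := by
  -- `T r` are the power-basis coordinates of the element with coordinates `r`, by `y = φ c - x ^ n`
  let T : (Fin (n + 1) → R) → Fin (n + 1) → R := fun r =>
    r + Pi.single 0 (c * r (Fin.last n)) - Pi.single (Fin.last n) (2 * r (Fin.last n))
  have hT : Involutive T := fun r => by
    have hlast : T r (Fin.last n) = -r (Fin.last n) := by
      simp [T, (Fin.last_pos' (n := n)).ne]
      ring
    funext i
    simp only [T, hlast, Pi.add_apply, Pi.sub_apply]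
    rw [mul_neg, mul_neg, Pi.single_neg, Pi.single_neg]
    simp only [Pi.neg_apply]
    ring
  have hsingle (j : Fin (n + 1)) (a : R) :
      ∑ i, φ (Pi.single (M := fun _ => R) j a i) * x ^ (i : ℕ) = φ a * x ^ (j : ℕ) := by
    simp [Pi.single_apply, apply_ite φ, ite_mul]
  have hlast (r : Fin (n + 1) → R) : (∑ i, φ (r i) * if (i : ℕ) = n then y else x ^ (i : ℕ)) =
      ∑ i, φ (r i) * x ^ (i : ℕ) + φ (r (Fin.last n)) * (y - x ^ n) := by
    rw [Fin.sum_univ_castSucc, Fin.sum_univ_castSucc]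
    simp [Fin.val_castSucc, (Fin.is_lt _).ne]
    ring
  have hET : (fun r : Fin (n + 1) → R => ∑ i, φ (r i) * if (i : ℕ) = n then y else x ^ (i : ℕ)) =
      (fun r : Fin (n + 1) → R => ∑ i, φ (r i) * x ^ (i : ℕ)) ∘ T := by
    funext r
    rw [comp_apply, hlast]
    simp only [T, Pi.add_apply, Pi.sub_apply, map_add, map_sub, add_mul, sub_mul,
      Finset.sum_add_distrib, Finset.sum_sub_distrib, hsingle]
    simp [hy, map_ofNat]
    ring
  exact hET ▸ hE.comp hT.bijective

theorem AlgHom.existsUnique_sum_range_mul {K R S ι : Type*} [CommSemiring K] [Semiring R]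
    [Semiring S] [Algebra K R] [Algebra K S] [Fintype ι] (φ : R →ₐ[K] S) (b : ι → S)
    (h : Bijective fun r : ι → R => ∑ i, φ (r i) * b i) (f : S) :
    ∃! c : ι → φ.range, f = ∑ i, (c i : S) * b i := by
  let G : (ι → φ.range) → S := fun c => ∑ i, (c i : S) * b i
  have hG : Bijective G :=
    ⟨.of_comp_right (g := (φ.rangeRestrict ∘ ·)) h.1 φ.rangeRestrict_surjective.comp_left,
      .of_comp (g := (φ.rangeRestrict ∘ ·)) h.2⟩
  simpa [G, eq_comm] using hG.existsUnique f

namespace CVPolynomial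

variable (K : Type*) [CommRing K] (n : ℕ)

noncomputable def subst : MvPolynomial (Fin 2) K →ₐ[K] MvPolynomial (Fin 2) K :=
  aeval ![X 0 ^ n + X 1, X 0 * X 1]

noncomputable def relation : (MvPolynomial (Fin 2) K)[X] :=
  Polynomial.X ^ (n + 1) - Polynomial.C (X 0) * Polynomial.X + Polynomial.C (X 1)

theorem relation_monic [NeZero n] : (relation K n).Monic := by
  unfold relation; monicity!; exact fun h => absurd h (NeZero.ne n)

theorem relation_natDegree [Nontrivial K] [NeZero n] : (relation K n).natDegree = n + 1 := by
  unfold relation; compute_degree!; simp [NeZero.ne n]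

theorem eval₂_relation {S : Type*} [CommRing S] (f : MvPolynomial (Fin 2) K →+* S) (x : S) :
    (relation K n).eval₂ f x = x ^ (n + 1) - f (X 0) * x + f (X 1) := by
  simp [relation]

theorem eval₂_relation_subst_X_zero :
    (relation K n).eval₂ (subst K n : MvPolynomial (Fin 2) K →+* MvPolynomial (Fin 2) K) (X 0) =
      0 := by
  simp [eval₂_relation, subst]; ring

theorem adjoin_eq_range_subst :
    Algebra.adjoin K {X 0 ^ n + X 1, X 0 * X 1} = (subst K n).range := by
  rw [subst, ← Algebra.adjoin_range_eq_range_aeval, Matrix.range_cons_cons_empty]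

noncomputable def liftRelation : AdjoinRoot (relation K n) →ₐ[K] MvPolynomial (Fin 2) K :=
  AdjoinRoot.liftAlgHom _ (subst K n) (X 0) (eval₂_relation_subst_X_zero K n)

noncomputable def invLiftRelation : MvPolynomial (Fin 2) K →ₐ[K] AdjoinRoot (relation K n) :=
  aeval ![AdjoinRoot.root _, AdjoinRoot.of _ (X 0) - AdjoinRoot.root _ ^ n]

theorem liftRelation_comp_of :
    (liftRelation K n).comp (AdjoinRoot.ofAlgHom K (relation K n)) = subst K n :=
  AlgHom.ext fun _ => by simp [liftRelation]

theorem invLiftRelation_comp_subst :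
    (invLiftRelation K n).comp (subst K n) = AdjoinRoot.ofAlgHom K (relation K n) := by
  have hroot := AdjoinRoot.eval₂_root (relation K n)
  rw [eval₂_relation] at hroot
  apply MvPolynomial.algHom_ext
  intro i; fin_cases i <;> simp [invLiftRelation, subst]
  linear_combination -hroot

noncomputable def liftRelationEquiv : AdjoinRoot (relation K n) ≃ₐ[K] MvPolynomial (Fin 2) K :=
  AlgEquiv.ofAlgHom (liftRelation K n) (invLiftRelation K n)
    (MvPolynomial.algHom_ext fun i => by
      fin_cases i <;> simp [liftRelation, invLiftRelation, subst])
    (AdjoinRoot.algHom_ext'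
      (by rw [AlgHom.comp_assoc, liftRelation_comp_of, invLiftRelation_comp_subst, AlgHom.id_comp])
      (by simp [liftRelation, invLiftRelation]))

theorem bijective_lift_relation :
    Bijective (AdjoinRoot.lift _ (X 0) (eval₂_relation_subst_X_zero K n)) :=
  (liftRelationEquiv K n).bijective

end CVPolynomial

open CVPolynomial

theorem stmt11_general (p : ℕ) (hp : p.Prime) :
    ∀ f : MvPolynomial (Fin 2) (ZMod p),
      ∃! c : Fin (p + 1) →
          Algebra.adjoin (ZMod p)
            ({X 0 ^ p + X 1, X 0 * X 1} : Set (MvPolynomial (Fin 2) (ZMod p))),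
        f = ∑ i : Fin (p + 1),
          (c i : MvPolynomial (Fin 2) (ZMod p)) *
            (if (i : ℕ) = p then X 1 else X 0 ^ (i : ℕ)) := by
  have := Fact.mk hp
  have : NeZero p := ⟨hp.ne_zero⟩
  rw [adjoin_eq_range_subst]
  refine (subst _ p).existsUnique_sum_range_mul _ ?_
  refine bijective_sum_mul_pow_replace_last _ (X 0) (by simp [subst]) ?_
  exact AdjoinRoot.bijective_sum_mul_pow (relation_monic _ p) (relation_natDegree _ p) _
    (bijective_lift_relation _ p)

/-- `A = F_p[C,V]` (with `C = X 0`, `V = X 1`) is a free module over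
`D = F_p[D₁,D₂]`, `D₁ = C^p + V`, `D₂ = CV`, with basis
`1, C, C², …, C^(p-1), V`: every element has a unique expression
`∑_{i<p} d_i C^i + d_p V` with coefficients in `D`. -/
theorem stmt11 (p : ℕ) (hp : p.Prime) (hodd : Odd p) :
    ∀ f : MvPolynomial (Fin 2) (ZMod p),
      ∃! c : Fin (p + 1) →
          Algebra.adjoin (ZMod p)
            ({X 0 ^ p + X 1, X 0 * X 1} : Set (MvPolynomial (Fin 2) (ZMod p))),
        f = ∑ i : Fin (p + 1),
          (c i : MvPolynomial (Fin 2) (ZMod p)) *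
            (if (i : ℕ) = p then X 1 else X 0 ^ (i : ℕ)) :=
  stmt11_general p hp
end

section
/- Let p be an odd prime and B = F_p[C, D_1] ⊆ F_p[C, V] where D_1 = C^p + V (so B = F_p[C,V] as rings). Then B decomposes as an internal direct sum of F_p-vector spaces: B = F_p[D_1] ⊕ F_p[C]·C ⊕ ⨁_{j=0}^{p-1} F_p[D_1, D_2]·D_2 C^{j+1} ⊕ F_p[D_1,D_2]·D_2, where D_2 = C V. -/
open MvPolynomial

namespace Stmt12Aux

/-- exponent finsupp for the monomial `C^a V^b` -/
noncomputable def e (a b : ℕ) : Fin 2 →₀ ℕ := Finsupp.single 0 a + Finsupp.single 1 b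

lemma e_zero (a b : ℕ) : e a b 0 = a := by simp [e]
lemma e_one (a b : ℕ) : e a b 1 = b := by simp [e]

lemma e_inj {a b a' b' : ℕ} (h : e a b = e a' b') : a = a' ∧ b = b' := by
  constructor
  · have := DFunLike.congr_fun h 0
    rwa [e_zero, e_zero] at this
  · have := DFunLike.congr_fun h 1
    rwa [e_one, e_one] at this

lemma eq_e (d : Fin 2 →₀ ℕ) : d = e (d 0) (d 1) := by
  ext i
  fin_cases i
  · simp [e]
  · simp [e]

/-- the "key" of a monomial -/
def K (x : ℕ × ℕ) : ℕ := 2 * min x.1 x.2 + (if x.1 ≤ x.2 then 0 else 1)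

/-- rank function on monomials -/
def ρ (p : ℕ) (x : ℕ × ℕ) : ℕ :=
  (x.1 + p * x.2) * (x.1 + p * x.2) + 3 * (x.1 + p * x.2) + 1 - K x

lemma K_le (x : ℕ × ℕ) : K x ≤ 2 * x.1 + 1 := by
  unfold K
  have := min_le_left x.1 x.2
  split_ifs <;> omega

lemma rho_lt (p : ℕ) {x y : ℕ × ℕ} (hw : y.1 + p * y.2 = x.1 + p * x.2)
    (hK : K x < K y) : ρ p y < ρ p x := by
  have h1 := K_le y
  have h2 := K_le x
  unfold ρ
  rw [hw]
  omega

noncomputable def P (p m a b : ℕ) : MvPolynomial (Fin 2) (ZMod p) :=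
  (X 0 ^ p + X 1) ^ m * X 0 ^ a * X 1 ^ b

lemma mono_eq (p A B : ℕ) (c : ZMod p) :
    (C c : MvPolynomial (Fin 2) (ZMod p)) * X 0 ^ A * X 1 ^ B = monomial (e A B) c := by
  rw [X_pow_eq_monomial, X_pow_eq_monomial, C_apply, monomial_mul, monomial_mul]
  simp [e]

lemma P_eq (p m a b : ℕ) : P p m a b = ∑ k ∈ Finset.range (m + 1),
    monomial (e (a + p * (m - k)) (b + k)) ((m.choose k : ZMod p)) := by
  unfold P
  rw [add_comm ((X (0 : Fin 2) : MvPolynomial (Fin 2) (ZMod p)) ^ p) (X 1), add_pow,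
    Finset.sum_mul, Finset.sum_mul]
  refine Finset.sum_congr rfl fun k hk => ?_
  rw [← mono_eq, ← pow_mul]
  rw [MvPolynomial.C_eq_coe_nat]
  ring

lemma coeff_P_ne {p m a b a' b' : ℕ} (h : coeff (e a' b') (P p m a b) ≠ 0) :
    ∃ k, k ≤ m ∧ a' = a + p * (m - k) ∧ b' = b + k := by
  rw [P_eq, coeff_sum] at h
  obtain ⟨k, hk, hne⟩ := Finset.exists_ne_zero_of_sum_ne_zero h
  rw [coeff_monomial] at hne
  split at hne
  · next he =>
    obtain ⟨h1, h2⟩ := e_inj he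
    exact ⟨k, by have := Finset.mem_range.mp hk; omega, h1.symm, h2.symm⟩
  · exact absurd rfl hne


lemma coeff_P_bot (p m a b : ℕ) : coeff (e (a + p * m) b) (P p m a b) = 1 := by
  rw [P_eq, coeff_sum, Finset.sum_eq_single 0]
  · simp [coeff_monomial]
  · intro k hk hk0
    rw [coeff_monomial, if_neg]
    intro he
    exact hk0 (by have := (e_inj he).2; omega)
  · intro h
    exact absurd (Finset.mem_range.mpr (by omega)) h

lemma coeff_P_top (p m a b : ℕ) : coeff (e a (b + m)) (P p m a b) = 1 := by
  rw [P_eq, coeff_sum, Finset.sum_eq_single m]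
  · simp [coeff_monomial]
  · intro k hk hk0
    rw [coeff_monomial, if_neg]
    intro he
    exact hk0 (by have := (e_inj he).2; omega)
  · intro h
    exact absurd (Finset.mem_range.mpr (by omega)) h

/-- the family of generators, indexed by leading monomial -/
noncomputable def v (p : ℕ) : ℕ × ℕ → MvPolynomial (Fin 2) (ZMod p)
  | (a, b) =>
    if a = 0 then P p b 0 0
    else if b = 0 then P p 0 a 0
    else if a ≤ b then P p (b - a) a a
    else P p ((a - b - 1) / p) (b + ((a - b - 1) % p + 1)) b

/-- the index of the summand that the generator `v p x` belongs to -/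
def cidx (p : ℕ) : ℕ × ℕ → ℕ
  | (a, b) =>
    if a = 0 then 0
    else if b = 0 then 1
    else if a ≤ b then p + 2
    else (a - b - 1) % p + 2

lemma v_coeff_self (p : ℕ) (hp0 : 0 < p) (x : ℕ × ℕ) : coeff (e x.1 x.2) (v p x) = 1 := by
  obtain ⟨a, b⟩ := x
  simp only [v]
  by_cases h1 : a = 0
  · subst h1
    rw [if_pos rfl]
    simpa using coeff_P_top p b 0 0
  · rw [if_neg h1]
    by_cases h2 : b = 0
    · subst h2
      rw [if_pos rfl]
      simpa using coeff_P_bot p 0 a 0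
    · rw [if_neg h2]
      by_cases h3 : a ≤ b
      · rw [if_pos h3]
        have hb : a + (b - a) = b := by omega
        have := coeff_P_top p (b - a) a a
        rwa [hb] at this
      · rw [if_neg h3]
        have hdm := Nat.div_add_mod (a - b - 1) p
        have hA : (b + ((a - b - 1) % p + 1)) + p * ((a - b - 1) / p) = a := by omega
        have := coeff_P_bot p ((a - b - 1) / p) (b + ((a - b - 1) % p + 1)) b
        rwa [hA] at this

lemma v_coeff_lt (p : ℕ) (hp0 : 0 < p) (x y : ℕ × ℕ)
    (h : coeff (e y.1 y.2) (v p x) ≠ 0) (hxy : y ≠ x) : ρ p y < ρ p x := by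
  obtain ⟨a, b⟩ := x
  obtain ⟨a', b'⟩ := y
  simp only [v] at h
  by_cases h1 : a = 0
  · subst h1
    rw [if_pos rfl] at h
    obtain ⟨k, hk, ha', hb'⟩ := coeff_P_ne h
    have hkb : k < b := by
      by_contra h'
      apply hxy
      have hbk : b - k = 0 := by omega
      rw [hbk, Nat.mul_zero] at ha'
      simp only [Prod.mk.injEq]
      omega
    have hmul : p * (b - k) + p * k = p * b := by
      rw [← Nat.mul_add]; congr 1; omega
    have hp1 : p * 1 ≤ p * (b - k) := Nat.mul_le_mul_left p (by omega)
    have hpb' : p * b' = p * k := by rw [hb']; ring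
    refine rho_lt p ?_ ?_
    · simp only; omega
    · unfold K
      simp only
      split_ifs <;> omega
  · rw [if_neg h1] at h
    by_cases h2 : b = 0
    · subst h2
      rw [if_pos rfl] at h
      obtain ⟨k, hk, ha', hb'⟩ := coeff_P_ne h
      exfalso
      apply hxy
      have hbk : 0 - k = 0 := by omega
      rw [hbk, Nat.mul_zero] at ha'
      simp only [Prod.mk.injEq]
      omega
    · rw [if_neg h2] at h
      by_cases h3 : a ≤ b
      · rw [if_pos h3] at h
        obtain ⟨k, hk, ha', hb'⟩ := coeff_P_ne h
        have hkm : k < b - a := by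
          by_contra h'
          apply hxy
          have hbk : b - a - k = 0 := by omega
          rw [hbk, Nat.mul_zero] at ha'
          simp only [Prod.mk.injEq]
          omega
        have hmul : p * (b - a - k) + p * (a + k) = p * b := by
          rw [← Nat.mul_add]; congr 1; omega
        have hp1 : p * 1 ≤ p * (b - a - k) := Nat.mul_le_mul_left p (by omega)
        have hpb' : p * b' = p * (a + k) := by rw [hb']
        refine rho_lt p ?_ ?_
        · simp only; omega
        · unfold K
          simp only
          split_ifs <;> omega
      · rw [if_neg h3] at h
        obtain ⟨k, hk, ha', hb'⟩ := coeff_P_ne h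
        have hdm := Nat.div_add_mod (a - b - 1) p
        have hk0 : 0 < k := by
          by_contra h'
          apply hxy
          have hbk : (a - b - 1) / p - k = (a - b - 1) / p := by omega
          rw [hbk] at ha'
          simp only [Prod.mk.injEq]
          omega
        have hmul : p * ((a - b - 1) / p - k) + p * k = p * ((a - b - 1) / p) := by
          rw [← Nat.mul_add]; congr 1; omega
        have hpb' : p * b' = p * b + p * k := by rw [hb', Nat.mul_add]
        refine rho_lt p ?_ ?_
        · simp only; omega
        · unfold K
          simp only
          split_ifs <;> omega


lemma linearIndependent_v (p : ℕ) (hp0 : 0 < p) :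
    LinearIndependent (ZMod p) (v p) := by
  rw [linearIndependent_iff]
  intro l hl
  by_contra hne
  have hsupp : l.support.Nonempty := Finsupp.support_nonempty_iff.mpr hne
  obtain ⟨x0, hx0, hmax⟩ := Finset.exists_max_image l.support (ρ p) hsupp
  have key : coeff (e x0.1 x0.2) (Finsupp.linearCombination (ZMod p) (v p) l) = l x0 := by
    rw [Finsupp.linearCombination_apply, Finsupp.sum, coeff_sum,
      Finset.sum_eq_single x0]
    · rw [coeff_smul, v_coeff_self p hp0, smul_eq_mul, mul_one]
    · intro y hy hyx
      rw [coeff_smul]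
      have : coeff (e x0.1 x0.2) (v p y) = 0 := by
        by_contra h'
        have := v_coeff_lt p hp0 y x0 h' (Ne.symm hyx)
        have := hmax y hy
        omega
      rw [this, smul_eq_mul, mul_zero]
    · intro h
      exact absurd hx0 h
  rw [hl, coeff_zero] at key
  exact Finsupp.mem_support_iff.mp hx0 key.symm


lemma hv1 (p n : ℕ) : v p (0, n) = (X 0 ^ p + X 1) ^ n := by
  simp only [v, P, if_pos rfl]
  simp

lemma hv2 (p n : ℕ) : v p (n + 1, 0) = X 0 ^ (n + 1) := by
  simp only [v, P]
  rw [if_neg (by omega), if_pos trivial]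
  simp

lemma hv3 (p m n : ℕ) : v p (n + 1, m + n + 1) =
    (X 0 ^ p + X 1) ^ m * (X 0 * X 1) ^ n * (X 0 * X 1) := by
  simp only [v, P]
  rw [if_neg (by omega), if_neg (by omega), if_pos (by omega)]
  rw [show m + n + 1 - (n + 1) = m from by omega]
  ring

lemma hv4 (p m n j : ℕ) (hp0 : 0 < p) (hj1 : 1 ≤ j) (hjp : j ≤ p) :
    v p (n + 1 + j + p * m, n + 1) =
    (X 0 ^ p + X 1) ^ m * (X 0 * X 1) ^ n * (X 0 * X 1 * X 0 ^ j) := by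
  simp only [v, P]
  rw [if_neg (by omega), if_neg (by omega), if_neg (by omega)]
  rw [show n + 1 + j + p * m - (n + 1) - 1 = (j - 1) + p * m from by omega,
    Nat.add_mul_div_left _ _ hp0, Nat.add_mul_mod_self_left,
    Nat.div_eq_of_lt (by omega), Nat.mod_eq_of_lt (by omega)]
  rw [show n + 1 + (j - 1 + 1) = n + 1 + j from by omega, show 0 + m = m from by omega]
  rw [pow_add, mul_pow]
  ring

lemma cidx_lt (p : ℕ) (hp0 : 0 < p) (x : ℕ × ℕ) : cidx p x < p + 3 := by
  obtain ⟨a, b⟩ := x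
  simp only [cidx]
  have := Nat.mod_lt (a - b - 1) hp0
  split_ifs <;> omega

lemma c1 (p n : ℕ) : cidx p (0, n) = 0 := by simp [cidx]

lemma c2 (p n : ℕ) : cidx p (n + 1, 0) = 1 := by
  simp only [cidx]
  rw [if_neg (by omega), if_pos trivial]

lemma c3 (p m n : ℕ) : cidx p (n + 1, m + n + 1) = p + 2 := by
  simp only [cidx]
  rw [if_neg (by omega), if_neg (by omega), if_pos (by omega)]

lemma c4 (p m n j : ℕ) (hj1 : 1 ≤ j) (hjp : j ≤ p) :
    cidx p (n + 1 + j + p * m, n + 1) = j + 1 := by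
  simp only [cidx]
  rw [if_neg (by omega), if_neg (by omega), if_neg (by omega)]
  rw [show n + 1 + j + p * m - (n + 1) - 1 = (j - 1) + p * m from by omega,
    Nat.add_mul_mod_self_left, Nat.mod_eq_of_lt (by omega)]
  omega

lemma v_coeff_self' (p : ℕ) (hp0 : 0 < p) (a b : ℕ) :
    coeff (e a b) (v p (a, b)) = 1 :=
  v_coeff_self p hp0 (a, b)

lemma v_coeff_lt' (p : ℕ) (hp0 : 0 < p) (a b a' b' : ℕ)
    (h : coeff (e a' b') (v p (a, b)) ≠ 0) (hne : ¬(a' = a ∧ b' = b)) :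
    ρ p (a', b') < ρ p (a, b) :=
  v_coeff_lt p hp0 (a, b) (a', b') h
    (fun hh => hne ⟨congrArg Prod.fst hh, congrArg Prod.snd hh⟩)

end Stmt12Aux

open Stmt12Aux Submodule in

/-- The direct-sum decomposition (from the proof of Proposition 2.5)
`F_p[C,V] = F_p[D₁] ⊕ F_p[C]·C ⊕ ⨁_{j=0}^{p-1} F_p[D₁,D₂]·D₂C^(j+1) ⊕ F_p[D₁,D₂]·D₂`
as `F_p`-vector spaces, where `C = X 0`, `V = X 1`, `D₁ = C^p + V`, `D₂ = CV`.
The summands are indexed by `Fin (p+3)`: index `0` is `F_p[D₁]`, index `1` is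
`F_p[C]·C`, indices `2,…,p+1` are `F_p[D₁,D₂]·D₂C^(j+1)` for `j = 0,…,p-1`,
and index `p+2` is `F_p[D₁,D₂]·D₂`. -/
theorem stmt12 (p : ℕ) (hp : p.Prime) (hodd : Odd p)
    (D1 D2 : MvPolynomial (Fin 2) (ZMod p))
    (hD1 : D1 = X 0 ^ p + X 1) (hD2 : D2 = X 0 * X 1)
    (fam : Fin (p + 3) → Submodule (ZMod p) (MvPolynomial (Fin 2) (ZMod p)))
    (hfam : fam = fun i : Fin (p + 3) =>
      if (i : ℕ) = 0 then
        Subalgebra.toSubmodule (Algebra.adjoin (ZMod p) {D1})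
      else if (i : ℕ) = 1 then
        Submodule.map (LinearMap.mulRight (ZMod p) (X 0 : MvPolynomial (Fin 2) (ZMod p)))
          (Subalgebra.toSubmodule
            (Algebra.adjoin (ZMod p) {(X 0 : MvPolynomial (Fin 2) (ZMod p))}))
      else if (i : ℕ) = p + 2 then
        Submodule.map (LinearMap.mulRight (ZMod p) D2)
          (Subalgebra.toSubmodule (Algebra.adjoin (ZMod p) {D1, D2}))
      else
        Submodule.map (LinearMap.mulRight (ZMod p) (D2 * X 0 ^ ((i : ℕ) - 1)))
          (Subalgebra.toSubmodule (Algebra.adjoin (ZMod p) {D1, D2}))) :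
    iSup fam = ⊤ ∧ iSupIndep fam := by
  have hp0 : 0 < p := hp.pos
  subst hD1
  subst hD2
  -- evaluation of `fam`
  have hfam0 : ∀ i : Fin (p + 3), (i : ℕ) = 0 → fam i =
      Subalgebra.toSubmodule (Algebra.adjoin (ZMod p)
        {(X 0 ^ p + X 1 : MvPolynomial (Fin 2) (ZMod p))}) := by
    intro i hi
    simp only [hfam, hi]
    norm_num
  have hfam1 : ∀ i : Fin (p + 3), (i : ℕ) = 1 → fam i =
      Submodule.map (LinearMap.mulRight (ZMod p) (X 0 : MvPolynomial (Fin 2) (ZMod p)))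
        (Subalgebra.toSubmodule
          (Algebra.adjoin (ZMod p) {(X 0 : MvPolynomial (Fin 2) (ZMod p))})) := by
    intro i hi
    simp only [hfam, hi]
    norm_num
  have hfam2 : ∀ i : Fin (p + 3), (i : ℕ) = p + 2 → fam i =
      Submodule.map (LinearMap.mulRight (ZMod p) (X 0 * X 1 : MvPolynomial (Fin 2) (ZMod p)))
        (Subalgebra.toSubmodule (Algebra.adjoin (ZMod p)
          {(X 0 ^ p + X 1 : MvPolynomial (Fin 2) (ZMod p)), X 0 * X 1})) := by
    intro i hi
    simp only [hfam]
    rw [if_neg (by omega), if_neg (by omega), if_pos hi]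
  have hfam3 : ∀ i : Fin (p + 3), 2 ≤ (i : ℕ) → (i : ℕ) ≠ p + 2 → fam i =
      Submodule.map (LinearMap.mulRight (ZMod p)
          ((X 0 * X 1 : MvPolynomial (Fin 2) (ZMod p)) * X 0 ^ ((i : ℕ) - 1)))
        (Subalgebra.toSubmodule (Algebra.adjoin (ZMod p)
          {(X 0 ^ p + X 1 : MvPolynomial (Fin 2) (ZMod p)), X 0 * X 1})) := by
    intro i h2 hne
    simp only [hfam]
    rw [if_neg (by omega), if_neg (by omega), if_neg hne]
  -- generators belong to the family
  have hvmem : ∀ x : ℕ × ℕ, v p x ∈ iSup fam := by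
    rintro ⟨a, b⟩
    rcases Nat.eq_zero_or_pos a with ha | ha
    · subst ha
      refine Submodule.mem_iSup_of_mem (⟨0, by omega⟩ : Fin (p + 3)) ?_
      rw [hfam0 _ rfl, hv1]
      exact (Subalgebra.mem_toSubmodule _).mpr
        (pow_mem (Algebra.subset_adjoin (Set.mem_singleton _)) b)
    · rcases Nat.eq_zero_or_pos b with hb | hb
      · subst hb
        obtain ⟨n, rfl⟩ : ∃ n, a = n + 1 := ⟨a - 1, by omega⟩
        refine Submodule.mem_iSup_of_mem (⟨1, by omega⟩ : Fin (p + 3)) ?_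
        rw [hfam1 _ rfl, hv2]
        refine Submodule.mem_map.mpr ⟨X 0 ^ n, ?_, ?_⟩
        · exact (Subalgebra.mem_toSubmodule _).mpr
            (pow_mem (Algebra.subset_adjoin (Set.mem_singleton _)) n)
        · rw [LinearMap.mulRight_apply, pow_succ]
      · by_cases hab : a ≤ b
        · obtain ⟨n, rfl⟩ : ∃ n, a = n + 1 := ⟨a - 1, by omega⟩
          obtain ⟨m, rfl⟩ : ∃ m, b = m + n + 1 := ⟨b - (n + 1), by omega⟩
          refine Submodule.mem_iSup_of_mem (⟨p + 2, by omega⟩ : Fin (p + 3)) ?_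
          rw [hfam2 _ rfl, hv3]
          refine Submodule.mem_map.mpr
            ⟨(X 0 ^ p + X 1) ^ m * (X 0 * X 1) ^ n, ?_, ?_⟩
          · exact (Subalgebra.mem_toSubmodule _).mpr
              (mul_mem (pow_mem (Algebra.subset_adjoin (by simp)) m)
                (pow_mem (Algebra.subset_adjoin (by simp)) n))
          · rw [LinearMap.mulRight_apply]
        · -- a > b ≥ 1
          have hdm := Nat.div_add_mod (a - b - 1) p
          have hmlt := Nat.mod_lt (a - b - 1) hp0
          obtain ⟨n, rfl⟩ : ∃ n, b = n + 1 := ⟨b - 1, by omega⟩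
          have hx : (a, n + 1) =
              (n + 1 + ((a - (n + 1) - 1) % p + 1) + p * ((a - (n + 1) - 1) / p), n + 1) := by
            simp only [Prod.mk.injEq, and_true]
            omega
          rw [hx]
          refine Submodule.mem_iSup_of_mem
            (⟨(a - (n + 1) - 1) % p + 1 + 1, by omega⟩ : Fin (p + 3)) ?_
          rw [hfam3 _ (by show 2 ≤ (a - (n + 1) - 1) % p + 1 + 1; omega)
            (by show (a - (n + 1) - 1) % p + 1 + 1 ≠ p + 2; omega)]
          rw [hv4 p _ n _ hp0 (by omega) (by omega)]
          refine Submodule.mem_map.mpr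
            ⟨(X 0 ^ p + X 1) ^ ((a - (n + 1) - 1) / p) * (X 0 * X 1) ^ n, ?_, ?_⟩
          · exact (Subalgebra.mem_toSubmodule _).mpr
              (mul_mem (pow_mem (Algebra.subset_adjoin (by simp)) _)
                (pow_mem (Algebra.subset_adjoin (by simp)) n))
          · rw [LinearMap.mulRight_apply]
            rw [show (((⟨(a - (n + 1) - 1) % p + 1 + 1, by omega⟩ : Fin (p + 3)) : ℕ)) - 1
              = (a - (n + 1) - 1) % p + 1 from rfl]
  -- each summand lies in the span of its generators
  have hle : ∀ i : Fin (p + 3), fam i ≤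
      span (ZMod p) (v p '' {x : ℕ × ℕ | cidx p x = (i : ℕ)}) := by
    intro i
    by_cases hi0 : (i : ℕ) = 0
    · rw [hfam0 _ hi0, Algebra.adjoin_eq_span, Submodule.span_le]
      intro z hz
      obtain ⟨n, rfl⟩ := Submonoid.mem_closure_singleton.mp hz
      apply Submodule.subset_span
      exact ⟨(0, n), by simp only [Set.mem_setOf_eq, c1, hi0], hv1 p n⟩
    · by_cases hi1 : (i : ℕ) = 1
      · rw [hfam1 _ hi1, Algebra.adjoin_eq_span, Submodule.map_span, Submodule.span_le]
        rintro z ⟨w, hw, rfl⟩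
        obtain ⟨n, rfl⟩ := Submonoid.mem_closure_singleton.mp hw
        apply Submodule.subset_span
        refine ⟨(n + 1, 0), by simp only [Set.mem_setOf_eq, c2, hi1], ?_⟩
        rw [LinearMap.mulRight_apply, hv2, pow_succ]
      · by_cases hi2 : (i : ℕ) = p + 2
        · rw [hfam2 _ hi2, Algebra.adjoin_eq_span, Submodule.map_span, Submodule.span_le]
          rintro z ⟨w, hw, rfl⟩
          obtain ⟨m, n, rfl⟩ := (Submonoid.mem_closure_pair _ _ _).mp hw
          apply Submodule.subset_span
          refine ⟨(n + 1, m + n + 1), by simp only [Set.mem_setOf_eq, c3, hi2], ?_⟩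
          rw [LinearMap.mulRight_apply, hv3]
        · have h2 : 2 ≤ (i : ℕ) := by omega
          rw [hfam3 _ h2 hi2, Algebra.adjoin_eq_span, Submodule.map_span, Submodule.span_le]
          rintro z ⟨w, hw, rfl⟩
          obtain ⟨m, n, rfl⟩ := (Submonoid.mem_closure_pair _ _ _).mp hw
          apply Submodule.subset_span
          have hilt := i.isLt
          refine ⟨(n + 1 + ((i : ℕ) - 1) + p * m, n + 1), ?_, ?_⟩
          · simp only [Set.mem_setOf_eq]
            rw [c4 p m n _ (by omega) (by omega)]
            omega
          · rw [LinearMap.mulRight_apply, hv4 p m n _ hp0 (by omega) (by omega)]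
  constructor
  · -- iSup fam = ⊤
    have hmono : ∀ a b : ℕ, (monomial (e a b) (1 : ZMod p)) ∈ iSup fam := by
      suffices H : ∀ N a b, ρ p (a, b) < N →
          (monomial (e a b) (1 : ZMod p)) ∈ iSup fam by
        exact fun a b => H (ρ p (a, b) + 1) a b (Nat.lt_succ_self _)
      intro N
      induction N with
      | zero => exact fun a b h => absurd h (Nat.not_lt_zero _)
      | succ N ih =>
        intro a b hab
        have hsub : v p (a, b) - monomial (e a b) 1 ∈ iSup fam := by
          rw [MvPolynomial.as_sum (v p (a, b) - monomial (e a b) 1)]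
          apply Submodule.sum_mem
          intro d hd
          have hcoeff := MvPolynomial.mem_support_iff.mp hd
          have hde := eq_e d
          by_cases hcase : e a b = d
          · exfalso
            apply hcoeff
            rw [coeff_sub, coeff_monomial, if_pos hcase, ← hcase,
              v_coeff_self' p hp0 a b, sub_self]
          · have hvne : coeff d (v p (a, b)) ≠ 0 := by
              intro h0
              apply hcoeff
              rw [coeff_sub, h0, coeff_monomial, if_neg hcase, sub_zero]
            rw [hde] at hvne
            have hlt := v_coeff_lt' p hp0 a b (d 0) (d 1) hvne
              (by rintro ⟨h1', h2'⟩; exact hcase (by rw [hde, h1', h2']))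
            have hmem := ih (d 0) (d 1) (by omega)
            rw [show (monomial d (coeff d (v p (a, b) - monomial (e a b) 1)) :
                MvPolynomial (Fin 2) (ZMod p)) =
                (coeff d (v p (a, b) - monomial (e a b) 1)) •
                  monomial (e (d 0) (d 1)) (1 : ZMod p) from by
              rw [← hde, smul_monomial, smul_eq_mul, mul_one]]
            exact Submodule.smul_mem _ _ hmem
        have h1 := hvmem (a, b)
        have heq : (monomial (e a b) (1 : ZMod p)) =
            v p (a, b) - (v p (a, b) - monomial (e a b) 1) := by ring
        rw [heq]
        exact Submodule.sub_mem _ h1 hsub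
    rw [eq_top_iff]
    intro q _
    rw [MvPolynomial.as_sum q]
    apply Submodule.sum_mem
    intro d hd
    rw [show (monomial d (coeff d q) : MvPolynomial (Fin 2) (ZMod p)) =
        (coeff d q) • monomial (e (d 0) (d 1)) (1 : ZMod p) from by
      rw [← eq_e d, smul_monomial, smul_eq_mul, mul_one]]
    exact Submodule.smul_mem _ _ (hmono (d 0) (d 1))
  · -- independence
    rw [iSupIndep_def]
    intro i
    have hdisj : Disjoint {x : ℕ × ℕ | cidx p x = (i : ℕ)}
        {x : ℕ × ℕ | cidx p x ≠ (i : ℕ)} :=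
      Set.disjoint_left.mpr fun x hx hx' => hx' hx
    have hsup2 : (⨆ j, ⨆ _ : j ≠ i, fam j) ≤
        span (ZMod p) (v p '' {x : ℕ × ℕ | cidx p x ≠ (i : ℕ)}) := by
      refine iSup_le fun j => iSup_le fun hj => (hle j).trans (Submodule.span_mono
        (Set.image_mono fun x hx => ?_))
      simp only [Set.mem_setOf_eq] at hx ⊢
      rw [hx]
      exact fun hc => hj (Fin.ext hc)
    exact ((linearIndependent_v p hp0).disjoint_span_image hdisj).mono (hle i) hsup2
end

section
/- Let p be a prime with p-1 = 3m, m even. With M the span of monomials y_1^i y_2^{4m-i} v^m for i = 0 and m ≤ i ≤ 4m, and H = ⟨diag(ξ,ξ), diag(ξ^3,1)⟩ acting by diag(α,β)·(y_1^i y_2^j v^m) = α^{i+m} β^{j+m} (y_1^i y_2^j v^m), the invariant space M^H is 5-dimensional with basis y_1^{4m} v^m, y_1^{3m} y_2^m v^m, y_1^{2m} y_2^{2m} v^m, y_1^m y_2^{3m} v^m, y_2^{4m} v^m. -/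
/-- Lemma 4.12(2) of the paper: `H`-invariants of `M = (CS^m + T^m)v^m`, where
`H = ⟨diag(ξ,ξ), diag(ξ³,1)⟩`.  An element of `M` is encoded by its coefficient
function `f`, where `f i` is the coefficient of `y₁^i y₂^(4m-i) v^m` (with
`i = 0` or `m ≤ i ≤ 4m`); the element `diag(ξ,ξ)^s ⬝ diag(ξ³,1)^t` multiplies
this monomial by `ξ^(s·6m + 3t(i+m))`.  The invariants are 5-dimensional, spanned
by `y₁^(4m) v^m, y₁^(3m) y₂^m v^m, y₁^(2m) y₂^(2m) v^m, y₁^m y₂^(3m) v^m,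
y₂^(4m) v^m`. -/
theorem stmt14 (p m n : ℕ) (hp : p.Prime)
    (hm : p - 1 = 3 * m) (hn : m = 2 * n)
    (ξ : (ZMod p)ˣ) (hξ : orderOf ξ = p - 1)
    (f : ℕ → ZMod p) (hf : ∀ i, ¬(i = 0 ∨ (m ≤ i ∧ i ≤ 4 * m)) → f i = 0) :
    (∀ s t : ℤ, ∀ i, (i = 0 ∨ (m ≤ i ∧ i ≤ 4 * m)) →
        ((ξ ^ (s * (6 * (m : ℤ)) + t * (3 * ((i : ℤ) + m))) : (ZMod p)ˣ) : ZMod p)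
            * f i = f i) ↔
      (∀ i, f i ≠ 0 → i = 0 ∨ i = m ∨ i = 2 * m ∨ i = 3 * m ∨ i = 4 * m) := by
  haveI := Fact.mk hp
  have hp2 := hp.two_le
  have hm1 : 1 ≤ m := by omega
  have hord : (orderOf ξ : ℤ) = 3 * m := by rw [hξ]; omega
  constructor
  · intro hinv i hfi
    have hi : i = 0 ∨ (m ≤ i ∧ i ≤ 4 * m) := by
      by_contra h; exact hfi (hf i h)
    have h0 := hinv 0 1 i hi
    rw [zero_mul, zero_add, one_mul] at h0
    have h1 : ((ξ ^ (3 * ((i : ℤ) + m)) : (ZMod p)ˣ) : ZMod p) = 1 :=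
      mul_right_cancel₀ hfi (h0.trans (one_mul _).symm)
    have h2 : ξ ^ (3 * ((i : ℤ) + m)) = 1 := Units.ext (by simpa using h1)
    have h3 : (orderOf ξ : ℤ) ∣ 3 * ((i : ℤ) + m) := orderOf_dvd_iff_zpow_eq_one.mpr h2
    rw [hord] at h3
    have h5 : (m : ℤ) ∣ ((i : ℤ) + m) := by
      rcases h3 with ⟨c, hc⟩
      exact ⟨c, by linarith⟩
    have h4 : (m : ℤ) ∣ (i : ℤ) := by simpa using h5.sub (dvd_refl (m : ℤ))
    have h6 : m ∣ i := Int.natCast_dvd_natCast.mp h4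
    obtain ⟨k, hk⟩ := h6
    have hile : i ≤ 4 * m := by rcases hi with h | h <;> omega
    have hle : m * k ≤ m * 4 := by rw [← hk]; omega
    have hk4 : k ≤ 4 := Nat.le_of_mul_le_mul_left hle hm1
    interval_cases k <;> omega
  · intro hsupp s t i hi
    rcases eq_or_ne (f i) 0 with hfi | hfi
    · rw [hfi, mul_zero]
    · have h5 := hsupp i hfi
      have key : ξ ^ (s * (6 * (m : ℤ)) + t * (3 * ((i : ℤ) + m))) = 1 := by
        rw [← orderOf_dvd_iff_zpow_eq_one, hord]
        rcases h5 with h | h | h | h | h <;> subst h <;> push_cast <;>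
          [exact ⟨2*s + t, by ring⟩; exact ⟨2*s + 2*t, by ring⟩;
           exact ⟨2*s + 3*t, by ring⟩; exact ⟨2*s + 4*t, by ring⟩;
           exact ⟨2*s + 5*t, by ring⟩]
      rw [key, Units.val_one, one_mul]
end

section
/- Let H be a nontrivial 2-subgroup of GL_2(F_3) and let S^1 = F_3^2 be the natural 2-dimensional module and det the determinant character. Then dim (S^1)^H = dim (S^1 ⊗ det)^H; moreover dim (S^1)^H = 1 if and only if H is conjugate in GL_2(F_3) to the subgroup generated by diag(1,-1). -/
open Matrix

/-- `diag(1, -1) ∈ GL₂(F₃)`. -/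
def d1m1 : (Matrix (Fin 2) (Fin 2) (ZMod 3))ˣ :=
  ⟨diagonal ![1, 2], diagonal ![1, 2], by decide, by decide⟩

/-!
A nontrivial 2-group `H ≤ GL₂(F₃)` acts faithfully, so its fixed space is a proper subspace,
of dimension 0 or 1. If `H` fixes a nonzero vector, conjugate it to fix `e₁`. The elements of
2-power order fixing `e₁` are `1` and the reflections `!![1, c; 0, -1]`, and the product of two
distinct reflections is a transvection, of order 3; hence `H` is generated by one reflection, a
conjugate of `diag(1, -1)`. Conversely, a conjugate of `⟨diag(1, -1)⟩` fixes a line.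

Since `det² = 1` on `GL₂(F₃)`, the twist `g ↦ det g • g` is an involutive automorphism, and
`(S¹ ⊗ det)^H = (S¹)^{twist H}`. The twist sends `diag(1, -1)` to `diag(-1, 1)`, so it preserves
the conjugacy class of `⟨diag(1, -1)⟩`, and both dimensions are 1 exactly when `H` lies in it.
-/

namespace Matrix.GeneralLinearGroup

section CommRing

variable {n R : Type*} [Fintype n] [DecidableEq n] [CommRing R]

def vecStabilizer (x : n → R) : Subgroup (GL n R) where
  carrier := {g | (g : Matrix n n R) *ᵥ x = x}
  one_mem' := one_mulVec x
  mul_mem' {g h} hg hh := by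
    simp only [Set.mem_ofPred_eq, Units.val_mul, ← mulVec_mulVec] at *
    rw [hh, hg]
  inv_mem' {g} hg := by
    simp only [Set.mem_ofPred_eq] at *
    conv_lhs => rw [← hg]
    rw [mulVec_mulVec, Units.inv_mul, one_mulVec]

theorem mem_vecStabilizer {x : n → R} {g : GL n R} :
    g ∈ vecStabilizer x ↔ (g : Matrix n n R) *ᵥ x = x := Iff.rfl

theorem map_conj_vecStabilizer (g : GL n R) (x : n → R) :
    (vecStabilizer x).map (MulAut.conj g).toMonoidHom =
      vecStabilizer ((g : Matrix n n R) *ᵥ x) := by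
  ext h
  simp only [Subgroup.mem_map_equiv, MulAut.conj_symm_apply, mem_vecStabilizer, Units.val_mul,
    ← mulVec_mulVec]
  constructor
  · intro hx
    simpa only [mulVec_mulVec, ← Matrix.mul_assoc, Units.mul_inv, Matrix.one_mul] using
      congrArg ((g : Matrix n n R) *ᵥ ·) hx
  · intro hx
    rw [hx, mulVec_mulVec, Units.inv_mul, one_mulVec]

def fixedSubmodule (H : Subgroup (GL n R)) : Submodule R (n → R) where
  carrier := {x | ∀ g ∈ H, (g : Matrix n n R) *ᵥ x = x}
  zero_mem' _ _ := mulVec_zero _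
  add_mem' hx hy g hg := by rw [mulVec_add, hx g hg, hy g hg]
  smul_mem' c x hx g hg := by rw [mulVec_smul, hx g hg]

theorem mem_fixedSubmodule_iff_le_vecStabilizer {H : Subgroup (GL n R)} {x : n → R} :
    x ∈ fixedSubmodule H ↔ H ≤ vecStabilizer x := Iff.rfl

theorem fixedSubmodule_ne_top {H : Subgroup (GL n R)} (hH : H ≠ ⊥) :
    fixedSubmodule H ≠ ⊤ := by
  obtain ⟨g, hg, hg1⟩ := H.bot_or_exists_ne_one.resolve_left hH
  refine fun htop => hg1 (Units.ext (mulVec_injective (funext fun x => ?_)))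
  simpa using (htop ▸ Submodule.mem_top : x ∈ fixedSubmodule H) g hg

def detTwist : GL n R →* GL n R where
  toFun g := det g • g
  map_one' := by simp
  map_mul' g h := Units.ext <| by
    simp only [Units.val_smul, Units.smul_def, Units.val_mul, map_mul, smul_mul_smul_comm]

theorem coe_detTwist (g : GL n R) :
    (detTwist g : Matrix n n R) = (g : Matrix n n R).det • (g : Matrix n n R) := rfl

theorem coe_fixedSubmodule_map_detTwist (H : Subgroup (GL n R)) :
    (fixedSubmodule (H.map detTwist) : Set (n → R)) =
      {x | ∀ g ∈ H, (g : Matrix n n R).det • (g : Matrix n n R) *ᵥ x = x} := by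
  ext x
  simp [fixedSubmodule, coe_detTwist, smul_mulVec]

end CommRing

section Field

variable {n K : Type*} [Fintype n] [DecidableEq n] [Field K]

theorem exists_mul_inv_eq_of_mul_eq {a b : GL n K} (m : Matrix n n K) (hm : m.det ≠ 0)
    (h : m * a = b * m) : ∃ g : GL n K, g * a * g⁻¹ = b :=
  ⟨mkOfDetNeZero m hm, by rw [mul_inv_eq_iff_eq_mul]; exact Units.ext h⟩

theorem finrank_fixedSubmodule_le_one {H : Subgroup (GL (Fin 2) K)} (hne : H ≠ ⊥) :
    Module.finrank K (fixedSubmodule H) ≤ 1 := by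
  have := Submodule.finrank_lt (fixedSubmodule_ne_top hne)
  rw [Module.finrank_fin_fun] at this
  omega

end Field

end Matrix.GeneralLinearGroup

namespace Subgroup

variable {G : Type*} [Group G]

theorem map_conj_map_conj (a b : G) (K : Subgroup G) :
    (K.map (MulAut.conj b).toMonoidHom).map (MulAut.conj a).toMonoidHom =
      K.map (MulAut.conj (a * b)).toMonoidHom := by
  rw [map_map, map_mul]; rfl

theorem map_conj_one (K : Subgroup G) : K.map (MulAut.conj (1 : G)).toMonoidHom = K := by
  rw [map_one]; exact K.map_id

theorem map_conj_closure_singleton (g k : G) :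
    (closure {k}).map (MulAut.conj g).toMonoidHom = closure {g * k * g⁻¹} := by
  rw [MonoidHom.map_closure, Set.image_singleton]; rfl

end Subgroup

open Matrix.GeneralLinearGroup

def IsConjClosureD1m1 (H : Subgroup (GL (Fin 2) (ZMod 3))) : Prop :=
  ∃ g, (Subgroup.closure {d1m1}).map (MulAut.conj g).toMonoidHom = H

theorem exists_mulVec_e1_eq {x : Fin 2 → ZMod 3} (hx : x ≠ 0) :
    ∃ g : GL (Fin 2) (ZMod 3), (g : Matrix (Fin 2) (Fin 2) (ZMod 3)) *ᵥ ![1, 0] = x := by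
  have : ∀ x : Fin 2 → ZMod 3, x ≠ 0 →
      ∃ m : Matrix (Fin 2) (Fin 2) (ZMod 3), m.det ≠ 0 ∧ m *ᵥ ![1, 0] = x := by
    decide
  obtain ⟨m, hm, rfl⟩ := this x hx
  exact ⟨mkOfDetNeZero m hm, rfl⟩

theorem pow_sixteen_eq_one {H : Subgroup (GL (Fin 2) (ZMod 3))} (hH : IsPGroup 2 H)
    {h : GL (Fin 2) (ZMod 3)} (hh : h ∈ H) : h ^ 16 = 1 := by
  obtain ⟨k, hk⟩ := IsPGroup.iff_orderOf.1 hH ⟨h, hh⟩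
  rw [Subgroup.orderOf_mk] at hk
  have hcard : Nat.card (GL (Fin 2) (ZMod 3)) = 16 * 3 := by
    rw [card_GL_field]; simp [Fin.prod_univ_two]
  have h16 : 2 ^ k ∣ 16 :=
    (Nat.Coprime.pow_left k (by norm_num)).dvd_of_dvd_mul_right
      (hk ▸ hcard ▸ orderOf_dvd_natCard h)
  exact orderOf_dvd_iff_pow_eq_one.1 (hk ▸ h16)

def reflE1 (c : ZMod 3) : Matrix (Fin 2) (Fin 2) (ZMod 3) := !![1, c; 0, -1]

set_option maxRecDepth 10000 in
theorem eq_one_or_eq_reflE1 : ∀ m : Matrix (Fin 2) (Fin 2) (ZMod 3),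
    m ^ 16 = 1 → m *ᵥ ![1, 0] = ![1, 0] → m = 1 ∨ ∃ c, m = reflE1 c := by
  decide

set_option maxRecDepth 10000 in
theorem reflE1_mul_reflE1_pow_ne_one :
    ∀ a b : ZMod 3, a ≠ b → (reflE1 a * reflE1 b) ^ 16 ≠ 1 := by
  decide

theorem exists_conj_d1m1_eq_of_coe_eq_reflE1 {k : GL (Fin 2) (ZMod 3)} {c : ZMod 3}
    (hk : (k : Matrix (Fin 2) (Fin 2) (ZMod 3)) = reflE1 c) : ∃ g, g * d1m1 * g⁻¹ = k := by
  have : ∀ c : ZMod 3, !![1, c; 0, 1] * (d1m1 : Matrix (Fin 2) (Fin 2) (ZMod 3)) =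
      reflE1 c * !![1, c; 0, 1] := by
    decide
  exact exists_mul_inv_eq_of_mul_eq _ (by simp) (hk ▸ this c)

theorem isConjClosureD1m1_of_le_vecStabilizer_e1 {H : Subgroup (GL (Fin 2) (ZMod 3))}
    (hH : IsPGroup 2 H) (hne : H ≠ ⊥) (hfix : H ≤ vecStabilizer ![1, 0]) :
    IsConjClosureD1m1 H := by
  have hcls : ∀ h ∈ H, h = 1 ∨ ∃ c, (h : Matrix (Fin 2) (Fin 2) (ZMod 3)) = reflE1 c := by
    intro h hh
    refine (eq_one_or_eq_reflE1 _ ?_ (hfix hh)).imp_left Units.ext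
    rw [← Units.val_pow_eq_pow_val, pow_sixteen_eq_one hH hh, Units.val_one]
  obtain ⟨k, hkH, hk1⟩ := H.bot_or_exists_ne_one.resolve_left hne
  obtain ⟨c, hc⟩ := (hcls k hkH).resolve_left hk1
  have hH_eq : H = Subgroup.closure {k} := by
    refine le_antisymm (fun h hh => ?_)
      ((Subgroup.closure_le _).2 (Set.singleton_subset_iff.2 hkH))
    obtain rfl | ⟨b, hb⟩ := hcls h hh
    · exact one_mem _
    obtain rfl | hbc := eq_or_ne b c
    · exact Subgroup.subset_closure (Units.ext (hb.trans hc.symm))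
    -- the product of two distinct reflections fixing `e₁` is a transvection, of order 3
    refine absurd ?_ (reflE1_mul_reflE1_pow_ne_one b c hbc)
    rw [← hb, ← hc, ← Units.val_mul, ← Units.val_pow_eq_pow_val,
      pow_sixteen_eq_one hH (H.mul_mem hh hkH), Units.val_one]
  obtain ⟨g, hg⟩ := exists_conj_d1m1_eq_of_coe_eq_reflE1 hc
  exact ⟨g, by rw [Subgroup.map_conj_closure_singleton, hg, hH_eq]⟩

theorem isConjClosureD1m1_of_le_vecStabilizer {H : Subgroup (GL (Fin 2) (ZMod 3))}
    (hH : IsPGroup 2 H) (hne : H ≠ ⊥) {x : Fin 2 → ZMod 3} (hx : x ≠ 0)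
    (hfix : H ≤ vecStabilizer x) : IsConjClosureD1m1 H := by
  obtain ⟨a, rfl⟩ := exists_mulVec_e1_eq hx
  have hK : H.map (MulAut.conj a⁻¹).toMonoidHom ≤ vecStabilizer ![1, 0] := by
    have := Subgroup.map_mono (f := (MulAut.conj a⁻¹).toMonoidHom) hfix
    rwa [map_conj_vecStabilizer, mulVec_mulVec, Units.inv_mul, one_mulVec] at this
  have hK_ne : H.map (MulAut.conj a⁻¹).toMonoidHom ≠ ⊥ :=
    (Subgroup.map_eq_bot_iff_of_injective _ (MulAut.conj a⁻¹).injective).not.2 hne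
  obtain ⟨g, hg⟩ := isConjClosureD1m1_of_le_vecStabilizer_e1 (hH.map _) hK_ne hK
  refine ⟨a * g, ?_⟩
  rw [← Subgroup.map_conj_map_conj, hg, Subgroup.map_conj_map_conj, mul_inv_cancel,
    Subgroup.map_conj_one]

theorem fixedSubmodule_ne_bot_iff {H : Subgroup (GL (Fin 2) (ZMod 3))} (hH : IsPGroup 2 H)
    (hne : H ≠ ⊥) : fixedSubmodule H ≠ ⊥ ↔ IsConjClosureD1m1 H := by
  rw [Submodule.ne_bot_iff]
  constructor
  · rintro ⟨x, hx, hx0⟩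
    exact isConjClosureD1m1_of_le_vecStabilizer hH hne hx0 hx
  · rintro ⟨g, rfl⟩
    refine ⟨(g : Matrix (Fin 2) (Fin 2) (ZMod 3)) *ᵥ ![1, 0], ?_, fun h => ?_⟩
    · have hd : d1m1 ∈ vecStabilizer ![1, 0] := mem_vecStabilizer.2 (by decide)
      rw [mem_fixedSubmodule_iff_le_vecStabilizer, ← map_conj_vecStabilizer]
      exact Subgroup.map_mono ((Subgroup.closure_le _).2 (Set.singleton_subset_iff.2 hd))
    · have := congrArg (mulVec (g⁻¹).val) h
      simp only [mulVec_mulVec, Units.inv_mul, one_mulVec, mulVec_zero] at this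
      exact absurd this (by decide)

theorem finrank_fixedSubmodule_eq_one_iff {H : Subgroup (GL (Fin 2) (ZMod 3))}
    (hH : IsPGroup 2 H) (hne : H ≠ ⊥) :
    Module.finrank (ZMod 3) (fixedSubmodule H) = 1 ↔ IsConjClosureD1m1 H := by
  rw [← fixedSubmodule_ne_bot_iff hH hne, Ne, ← Submodule.finrank_eq_zero]
  have := finrank_fixedSubmodule_le_one hne
  omega

theorem detTwist_detTwist (g : GL (Fin 2) (ZMod 3)) : detTwist (detTwist g) = g := by
  set d := (g : Matrix (Fin 2) (Fin 2) (ZMod 3)).det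
  have hd : d ^ 2 = 1 :=
    ZMod.pow_card_sub_one_eq_one (p := 3) (by simpa [d] using (GeneralLinearGroup.det g).ne_zero)
  ext : 1
  rw [coe_detTwist, coe_detTwist, det_smul, smul_smul, Fintype.card_fin,
    show d ^ 2 * d * d = 1 by linear_combination (d ^ 2 + 1) * hd, one_smul]

theorem map_detTwist_map_detTwist (H : Subgroup (GL (Fin 2) (ZMod 3))) :
    (H.map detTwist).map detTwist = H := by
  rw [Subgroup.map_map]
  convert H.map_id
  ext g : 1
  exact detTwist_detTwist g

theorem IsConjClosureD1m1.map_detTwist {H : Subgroup (GL (Fin 2) (ZMod 3))}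
    (hH : IsConjClosureD1m1 H) : IsConjClosureD1m1 (H.map detTwist) := by
  obtain ⟨g, rfl⟩ := hH
  -- `detTwist d1m1 = diag(-1, 1)`, which the coordinate swap conjugates to `d1m1`
  obtain ⟨w, hw⟩ : ∃ w, w * d1m1 * w⁻¹ = detTwist d1m1 :=
    exists_mul_inv_eq_of_mul_eq !![0, 1; 1, 0] (by decide) (by decide)
  refine ⟨detTwist g * w, ?_⟩
  rw [← Subgroup.map_conj_map_conj, Subgroup.map_conj_closure_singleton, hw,
    ← Set.image_singleton, ← MonoidHom.map_closure, Subgroup.map_map, Subgroup.map_map]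
  congr 1
  ext h : 1
  simp [MulAut.conj_apply]

theorem isConjClosureD1m1_map_detTwist_iff (H : Subgroup (GL (Fin 2) (ZMod 3))) :
    IsConjClosureD1m1 (H.map detTwist) ↔ IsConjClosureD1m1 H :=
  ⟨fun h => map_detTwist_map_detTwist H ▸ h.map_detTwist, IsConjClosureD1m1.map_detTwist⟩

/-- Let `H` be a nontrivial 2-subgroup of `GL₂(F₃)`, `F1 = (S¹)^H` the fixed
space of the natural module `S¹ = F₃²` and `F2 = (S¹ ⊗ det)^H` the fixed space
of its determinant twist.  Then `dim F1 = dim F2`, and `dim F1 = 1` iff `H` is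
conjugate to `⟨diag(1,-1)⟩`. -/
theorem stmt17 (H : Subgroup (Matrix (Fin 2) (Fin 2) (ZMod 3))ˣ)
    (hH : IsPGroup 2 H) (hne : H ≠ ⊥)
    (F1 F2 : Submodule (ZMod 3) (Fin 2 → ZMod 3))
    (hF1 : (F1 : Set (Fin 2 → ZMod 3)) =
      {x | ∀ g ∈ H, Matrix.mulVec (g : Matrix (Fin 2) (Fin 2) (ZMod 3)) x = x})
    (hF2 : (F2 : Set (Fin 2 → ZMod 3)) =
      {x | ∀ g ∈ H, (g : Matrix (Fin 2) (Fin 2) (ZMod 3)).det •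
        Matrix.mulVec (g : Matrix (Fin 2) (Fin 2) (ZMod 3)) x = x}) :
    Module.finrank (ZMod 3) F1 = Module.finrank (ZMod 3) F2 ∧
    (Module.finrank (ZMod 3) F1 = 1 ↔
      ∃ g : (Matrix (Fin 2) (Fin 2) (ZMod 3))ˣ,
        Subgroup.map (MulAut.conj g).toMonoidHom (Subgroup.closure {d1m1}) = H) := by
  obtain rfl : F1 = fixedSubmodule H := SetLike.coe_injective hF1
  obtain rfl : F2 = fixedSubmodule (H.map detTwist) :=
    SetLike.coe_injective (hF2.trans (coe_fixedSubmodule_map_detTwist H).symm)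
  have hne' : H.map detTwist ≠ ⊥ := (Subgroup.map_eq_bot_iff_of_injective _
    (Function.LeftInverse.injective detTwist_detTwist)).not.2 hne
  have h1 := finrank_fixedSubmodule_eq_one_iff hH hne
  have h2 := finrank_fixedSubmodule_eq_one_iff (hH.map detTwist) hne'
  rw [isConjClosureD1m1_map_detTwist_iff] at h2
  have hiff := h1.trans h2.symm
  have := finrank_fixedSubmodule_le_one hne
  have := finrank_fixedSubmodule_le_one hne'
  exact ⟨by omega, h1⟩
end
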